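/- arXiv:2511.23093 — 2 statements merged into one kernel-verified Lean document; each statement's English description precedes it below -/
import Mathlib

section
/- Let n ≤ m, let π be a permutation of [n], let Π be a permutation of [m], and let f be any ordered homomorphism from the augmented ordered matching M'(π) to the augmented ordered matching M'(Π). Then f maps the two endpoints of every permutation edge of M'(π) to the two endpoints of a permutation edge of M'(Π) (never to an auxiliary edge), and distinct permutation edges of M'(π) are mapped to distinct permutation edges of M'(Π). -/
/-- The position, inside the augmented ordered matching `M'(σ)` on `6s` vertices,
of the `i`-th original vertex of `M(σ)` (0-indexed, `i < 2s`). -/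
def augPos (s i : ℕ) : ℕ := 3 * i + (if s ≤ i then 2 else 0)

theorem augPos_lt {s i : ℕ} (h : i < 2 * s) : augPos s i < 6 * s := by
  unfold augPos; split <;> omega

/-- The `i`-th original vertex of `M(σ)` viewed as a vertex of `M'(σ)`. -/
def augVert (s i : ℕ) (h : i < 2 * s) : Fin (6 * s) := ⟨augPos s i, augPos_lt h⟩

/-- The augmented ordered matching `M'(σ)`, with its permutation edges
(joining `augPos s i` and `augPos s (s + σ i)` for `i ∈ [s]`) and its `2s`
auxiliary edges. -/
def augMatching (s : ℕ) (σ : Equiv.Perm (Fin s)) : SimpleGraph (Fin (6 * s)) :=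
  SimpleGraph.fromRel (fun a b =>
    (∃ i : Fin s, (a : ℕ) = augPos s i ∧ (b : ℕ) = augPos s (s + (σ i : ℕ))) ∨
    (∃ i : ℕ, i < 2 * s - 1 ∧ (a : ℕ) = augPos s i + 1 ∧ (b : ℕ) = augPos s i + 2) ∨
    ((a : ℕ) = 3 * s ∧ (b : ℕ) = 3 * s + 1))


/-!
An ordered homomorphism is strictly increasing along every edge, so any two consecutive edges
`a < b ≤ c < d` of `M'(π)` have images spanning at least three distinct positions. Every
permutation edge of `M'(π)` encloses the two middle auxiliary edges, so its image is not an edge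
`{x, x + 1}`, i.e. not an auxiliary edge; hence it is a permutation edge of `M'(Π)`. Between the
left endpoints of two permutation edges lies an auxiliary edge, so their images are distinct, and
so are the image edges.
-/

lemma SimpleGraph.Hom.lt_of_adj_of_le {V W : Type*} [Preorder V] [PartialOrder W]
    {G : SimpleGraph V} {H : SimpleGraph W} (φ : G →g H) (hφ : Monotone φ) {x y : V}
    (hxy : G.Adj x y) (hle : x ≤ y) : φ x < φ y :=
  lt_of_le_of_ne (hφ hle) (φ.map_adj hxy).ne

lemma augPos_of_lt {s i : ℕ} (h : i < s) : augPos s i = 3 * i := by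
  simp [augPos, Nat.not_le.mpr h]

lemma augPos_of_le {s i : ℕ} (h : s ≤ i) : augPos s i = 3 * i + 2 := by
  simp [augPos, h]

namespace augMatching

variable {s : ℕ} {σ : Equiv.Perm (Fin s)}

lemma adj_of_rel {a b : Fin (6 * s)} (hne : a ≠ b)
    (h : (∃ i : Fin s, (a : ℕ) = augPos s i ∧ (b : ℕ) = augPos s (s + (σ i : ℕ))) ∨
      (∃ i : ℕ, i < 2 * s - 1 ∧ (a : ℕ) = augPos s i + 1 ∧ (b : ℕ) = augPos s i + 2) ∨
      ((a : ℕ) = 3 * s ∧ (b : ℕ) = 3 * s + 1)) :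
    (augMatching s σ).Adj a b := by
  rw [augMatching, SimpleGraph.fromRel_adj]
  exact ⟨hne, Or.inl h⟩

lemma adj_perm (i : Fin s) :
    (augMatching s σ).Adj (augVert s i (by omega)) (augVert s (s + σ i) (by omega)) := by
  refine adj_of_rel ?_ (Or.inl ⟨i, rfl, rfl⟩)
  simp only [ne_eq, augVert, Fin.mk.injEq, augPos_of_lt i.isLt, augPos_of_le (Nat.le_add_right s _)]
  omega

lemma adj_aux {i : ℕ} (hi : i < s) :
    (augMatching s σ).Adj ⟨3 * i + 1, by omega⟩ ⟨3 * i + 2, by omega⟩ :=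
  adj_of_rel (by simp) (Or.inr (Or.inl ⟨i, by omega, by simp [augPos_of_lt hi]⟩))

lemma adj_mid (hs : 0 < s) :
    (augMatching s σ).Adj ⟨3 * s, by omega⟩ ⟨3 * s + 1, by omega⟩ :=
  adj_of_rel (by simp) (Or.inr (Or.inr ⟨rfl, rfl⟩))

lemma eq_succ_or_perm_of_adj {u v : Fin (6 * s)} (h : (augMatching s σ).Adj u v) (huv : u < v) :
    (v : ℕ) = u + 1 ∨
      ∃ i : Fin s, u = augVert s i (by omega) ∧ v = augVert s (s + σ i) (by omega) := by
  rw [augMatching, SimpleGraph.fromRel_adj] at h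
  have hi (i : Fin s) : augPos s i = 3 * i := augPos_of_lt i.isLt
  have hσi (i : Fin s) : augPos s (s + σ i) = 3 * (s + σ i) + 2 :=
    augPos_of_le (Nat.le_add_right s _)
  have := Fin.lt_def.mp huv
  obtain ⟨-, (⟨i, hu, hv⟩ | ⟨i, -, hu, hv⟩ | ⟨hu, hv⟩) |
    (⟨i, hv, hu⟩ | ⟨i, -, hv, hu⟩ | ⟨hv, hu⟩)⟩ := h
  · exact Or.inr ⟨i, Fin.ext hu, Fin.ext hv⟩
  all_goals first | (left; omega) | (have := (σ i).isLt; rw [hi] at hv; rw [hσi] at hu; omega)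

end augMatching

open augMatching

section

variable {n m : ℕ} {p : Equiv.Perm (Fin n)} {P : Equiv.Perm (Fin m)}
  (φ : augMatching n p →g augMatching m P)

lemma exists_perm_edge_image (hφ : Monotone φ) (i : Fin n) : ∃ j : Fin m,
    φ (augVert n i (by omega)) = augVert m j (by omega) ∧
      φ (augVert n (n + p i) (by omega)) = augVert m (m + P j) (by omega) := by
  have hn : 0 < n := i.pos
  have hL : ((augVert n i (by omega) : Fin (6 * n)) : ℕ) = 3 * i := augPos_of_lt i.isLt
  have hR : ((augVert n (n + p i) (by omega) : Fin (6 * n)) : ℕ) = 3 * (n + p i) + 2 :=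
    augPos_of_le (Nat.le_add_right n _)
  have hlt := φ.lt_of_adj_of_le hφ (adj_perm i) (by simp only [Fin.le_def]; omega)
  rcases eq_succ_or_perm_of_adj (φ.map_adj (adj_perm i)) hlt with hsucc | ⟨j, hj⟩
  · exfalso
    -- `φ L ≤ φ a < φ b ≤ φ c < φ d ≤ φ R` for the middle auxiliary edges `ab`, `cd`
    have h₁ := φ.lt_of_adj_of_le hφ (adj_aux (σ := p) (Nat.sub_one_lt_of_lt hn))
      (by simp only [Fin.le_def]; omega)
    have h₂ := φ.lt_of_adj_of_le hφ (adj_mid (σ := p) hn) (by simp only [Fin.le_def]; omega)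
    have h₀ := hφ (a := augVert n i (by omega)) (b := ⟨3 * (n - 1) + 1, by omega⟩)
      (by simp only [Fin.le_def]; omega)
    have h₁₂ := hφ (a := ⟨3 * (n - 1) + 2, by omega⟩) (b := ⟨3 * n, by omega⟩)
      (by simp only [Fin.le_def]; omega)
    have h₃ := hφ (a := ⟨3 * n + 1, by omega⟩) (b := augVert n (n + p i) (by omega))
      (by simp only [Fin.le_def]; omega)
    simp only [Fin.le_def, Fin.lt_def] at h₀ h₁ h₁₂ h₂ h₃
    omega
  · exact ⟨j, hj⟩

lemma strictMono_perm_left (hφ : Monotone φ) :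
    StrictMono fun i : Fin n => φ (augVert n i (by omega)) := by
  intro i j hij
  have hi : ((augVert n i (by omega) : Fin (6 * n)) : ℕ) = 3 * i := augPos_of_lt i.isLt
  have hj : ((augVert n j (by omega) : Fin (6 * n)) : ℕ) = 3 * j := augPos_of_lt j.isLt
  have hij' := Fin.lt_def.mp hij
  calc φ (augVert n i _) ≤ φ ⟨3 * i + 1, by omega⟩ := hφ (by simp only [Fin.le_def]; omega)
    _ < φ ⟨3 * i + 2, by omega⟩ := φ.lt_of_adj_of_le hφ (adj_aux i.isLt) (by simp)
    _ ≤ φ (augVert n j _) := hφ (by simp only [Fin.le_def]; omega)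

end

/-- Any ordered homomorphism `f : M'(p) → M'(P)` sends the endpoints of every
permutation edge of `M'(p)` to the endpoints of a permutation edge of `M'(P)`
(never to an auxiliary edge), and distinct permutation edges of `M'(p)` go to
distinct permutation edges of `M'(P)`. -/
theorem stmt2 (n m : ℕ) (p : Equiv.Perm (Fin n)) (P : Equiv.Perm (Fin m))
    (f : Fin (6 * n) → Fin (6 * m)) (hmono : Monotone f)
    (hhom : ∀ u v : Fin (6 * n),
      (augMatching n p).Adj u v → (augMatching m P).Adj (f u) (f v)) :
    ∃ g : Fin n → Fin m, Function.Injective g ∧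
      ∀ i : Fin n,
        f (augVert n (i : ℕ) (by have := i.isLt; omega)) =
          augVert m ((g i : ℕ)) (by have := (g i).isLt; omega) ∧
        f (augVert n (n + (p i : ℕ)) (by have := (p i).isLt; omega)) =
          augVert m (m + (P (g i) : ℕ)) (by have := (P (g i)).isLt; omega) := by
  let φ : augMatching n p →g augMatching m P := ⟨f, hhom _ _⟩
  choose g hg using exists_perm_edge_image φ hmono
  refine ⟨g, fun i j hij => (strictMono_perm_left φ hmono).injective ?_, hg⟩
  rw [(hg i).1, (hg j).1, hij]
end

section
/- Let G be an ordered graph whose ordered core is an ordered matching N. Then for every ordered matching M, there exists an ordered homomorphism G → M if and only if there is a subset X of V(M) that is a union of edges of M such that the ordered subgraph of M induced by X is order-isomorphic to N. -/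
/-- An ordered matching: every vertex is incident to exactly one edge. -/
def IsOrderedMatching {V : Type*} (G : SimpleGraph V) : Prop :=
  ∀ v : V, ∃! w : V, G.Adj v w

/-- An ordered core: an ordered graph admitting no ordered retraction to a
proper ordered subgraph (a subgraph different from the whole graph). -/
def IsOrderedCore {V : Type*} [LinearOrder V] (G : SimpleGraph V) : Prop :=
  ∀ H : G.Subgraph, H ≠ ⊤ →
    ¬ ∃ r : V → V, Monotone r ∧ (∀ x : V, r x ∈ H.verts) ∧
      (∀ u v : V, G.Adj u v → H.Adj (r u) (r v)) ∧ (∀ x ∈ H.verts, r x = x)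

/-- Homomorphic equivalence of ordered graphs: each admits an ordered
homomorphism to the other. -/
def OrderedHomEquiv {V W : Type*} [Preorder V] [Preorder W]
    (G : SimpleGraph V) (H : SimpleGraph W) : Prop :=
  (∃ f : V → W, Monotone f ∧ ∀ u v : V, G.Adj u v → H.Adj (f u) (f v)) ∧
  (∃ g : W → V, Monotone g ∧ ∀ u v : W, H.Adj u v → G.Adj (g u) (g v))

/-!
Composing `G → M` with `N → G` gives an ordered homomorphism `h : N → M`, and the point is that
`h` is injective; its image is then the required union of edges. If `h` were not injective,
choose for every edge `{w < w'}` of `M` in the image of `h` a preimage `x` of `w` and send the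
fibres of `w` and `w'` to `x` and to the partner of `x`. Since both fibres are intervals of the
order, this is an ordered retraction of `N` onto a proper subgraph, contradicting that `N` is a
core.
-/

namespace IsOrderedMatching

variable {U W : Type*} {N : SimpleGraph U} {M : SimpleGraph W}

noncomputable def partner (hN : IsOrderedMatching N) (u : U) : U :=
  (hN u).choose

variable (hN : IsOrderedMatching N) (hM : IsOrderedMatching M)

theorem adj_partner (u : U) : N.Adj u (hN.partner u) :=
  (hN u).choose_spec.1

theorem eq_partner_of_adj {u v : U} (h : N.Adj u v) : v = hN.partner u :=
  (hN u).choose_spec.2 v h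

theorem partner_partner (u : U) : hN.partner (hN.partner u) = u :=
  (hN.eq_partner_of_adj (hN.adj_partner u).symm).symm

theorem partner_ne (u : U) : hN.partner u ≠ u :=
  (hN.adj_partner u).ne'

theorem map_partner {h : U → W} (hh : ∀ u v, N.Adj u v → M.Adj (h u) (h v)) (u : U) :
    h (hN.partner u) = hM.partner (h u) :=
  hM.eq_partner_of_adj (hh _ _ (hN.adj_partner u))

include hN hM in
theorem adj_iff_adj_of_injective {h : U → W} (hinj : Function.Injective h)
    (hh : ∀ u v, N.Adj u v → M.Adj (h u) (h v)) (u v : U) :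
    N.Adj u v ↔ M.Adj (h u) (h v) := by
  refine ⟨hh u v, fun huv => ?_⟩
  have : v = hN.partner u := hinj (by rw [hM.eq_partner_of_adj huv, hN.map_partner hM hh])
  exact this ▸ hN.adj_partner u

noncomputable def equivariantLift [LinearOrder W] (s : W → U) (w : W) : U :=
  if w < hM.partner w then s w else hN.partner (s (hM.partner w))

theorem equivariantLift_partner [LinearOrder W] (s : W → U) (w : W) :
    hN.equivariantLift hM s (hM.partner w) = hN.partner (hN.equivariantLift hM s w) := by
  rcases (hM.partner_ne w).symm.lt_or_gt with hup | hdown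
  · simp only [equivariantLift, hM.partner_partner, if_pos hup, if_neg hup.not_gt]
  · simp only [equivariantLift, hM.partner_partner, if_pos hdown, if_neg hdown.not_gt,
      hN.partner_partner]

theorem apply_equivariantLift [LinearOrder W] {h : U → W}
    (hh : ∀ u v, N.Adj u v → M.Adj (h u) (h v)) {s : W → U}
    (hs : ∀ w ∈ Set.range h, h (s w) = w) (u : U) :
    h (hN.equivariantLift hM s (h u)) = h u := by
  unfold equivariantLift
  split_ifs
  · exact hs _ ⟨u, rfl⟩
  · rw [hN.map_partner hM hh, hs _ ⟨hN.partner u, hN.map_partner hM hh u⟩, hM.partner_partner]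

end IsOrderedMatching

theorem Monotone.comp_of_apply_comp_apply {U W : Type*} [LinearOrder U] [PartialOrder W]
    {h : U → W} (hh : Monotone h) {R : W → U} (hR : ∀ x, h (R (h x)) = h x) :
    Monotone (R ∘ h) := by
  intro x y hxy
  rcases (hh hxy).lt_or_eq with hlt | heq
  · refine le_of_not_gt fun hgt => hlt.not_ge ?_
    simpa only [Function.comp_apply, hR] using hh hgt.le
  · simp only [Function.comp_apply, heq, le_refl]

theorem IsOrderedCore.surjective_of_idempotent {U : Type*} [LinearOrder U] {N : SimpleGraph U}
    (hN : IsOrderedCore N) {r : U → U} (hr : Monotone r)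
    (hhom : ∀ u v, N.Adj u v → N.Adj (r u) (r v)) (hidem : ∀ x, r (r x) = r x) :
    Function.Surjective r := by
  by_contra hsurj
  obtain ⟨u, hu⟩ := not_forall.mp hsurj
  refine hN ((⊤ : N.Subgraph).induce (Set.range r)) (fun htop => hu ?_)
    ⟨r, hr, fun x => ⟨x, rfl⟩, fun x y hxy => ⟨⟨x, rfl⟩, ⟨y, rfl⟩, hhom x y hxy⟩, ?_⟩
  · change u ∈ Set.range r
    rw [show Set.range r = _ from congrArg SimpleGraph.Subgraph.verts htop]
    trivial
  · rintro _ ⟨y, rfl⟩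
    exact hidem y

theorem IsOrderedCore.injective_of_hom_matching {U W : Type*} [LinearOrder U] [LinearOrder W]
    {N : SimpleGraph U} {M : SimpleGraph W} (hNcore : IsOrderedCore N)
    (hN : IsOrderedMatching N) (hM : IsOrderedMatching M) {h : U → W} (hmono : Monotone h)
    (hhom : ∀ u v, N.Adj u v → M.Adj (h u) (h v)) :
    Function.Injective h := by
  intro a c hac
  have : Nonempty U := ⟨a⟩
  set R := hN.equivariantLift hM (Function.invFun h)
  have hRpartner : ∀ w, R (hM.partner w) = hN.partner (R w) := hN.equivariantLift_partner hM _
  have hR : ∀ x, h (R (h x)) = h x :=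
    hN.apply_equivariantLift hM hhom fun _ hw => Function.invFun_eq hw
  have hsurj : Function.Surjective (R ∘ h) := by
    refine hNcore.surjective_of_idempotent (hmono.comp_of_apply_comp_apply hR)
      (fun u v huv => ?_) (fun x => by simp only [Function.comp_apply, hR])
    rw [hN.eq_partner_of_adj huv, Function.comp_apply, Function.comp_apply,
      hN.map_partner hM hhom, hRpartner]
    exact hN.adj_partner _
  have hfix : ∀ x, R (h x) = x := by
    intro x
    obtain ⟨y, rfl⟩ := hsurj x
    simp only [Function.comp_apply, hR]
  rw [← hfix a, ← hfix c, hac]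

theorem stmt12_general {V U W : Type*} [LinearOrder V] [LinearOrder U] [LinearOrder W]
    (G : SimpleGraph V) (N : SimpleGraph U)
    (hN : IsOrderedMatching N) (hNcore : IsOrderedCore N)
    (hequiv : OrderedHomEquiv G N)
    (M : SimpleGraph W) (hM : IsOrderedMatching M) :
    (∃ f : V → W, Monotone f ∧ ∀ u v : V, G.Adj u v → M.Adj (f u) (f v)) ↔
    ∃ X : Set W, (∀ x ∈ X, ∀ y : W, M.Adj x y → y ∈ X) ∧
      ∃ e : U ≃o X, ∀ a b : U, N.Adj a b ↔ (M.induce X).Adj (e a) (e b) := by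
  obtain ⟨⟨f, hfmono, hfhom⟩, ⟨g, hgmono, hghom⟩⟩ := hequiv
  constructor
  · rintro ⟨p, hpmono, hphom⟩
    have hhom : ∀ u v, N.Adj u v → M.Adj (p (g u)) (p (g v)) :=
      fun u v huv => hphom _ _ (hghom u v huv)
    have hinj : Function.Injective (p ∘ g) :=
      hNcore.injective_of_hom_matching hN hM (hpmono.comp hgmono) hhom
    refine ⟨Set.range (p ∘ g), ?_, ((hpmono.comp hgmono).strictMono_of_injective hinj).orderIso,
      hN.adj_iff_adj_of_injective hM hinj hhom⟩
    rintro _ ⟨u, rfl⟩ y hy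
    exact ⟨hN.partner u, by rw [hM.eq_partner_of_adj hy]; exact hN.map_partner hM hhom u⟩
  · rintro ⟨X, -, e, he⟩
    exact ⟨fun v => e (f v), fun x y hxy => e.monotone (hfmono hxy),
      fun u v huv => (he _ _).mp (hfhom u v huv)⟩

/-- Let `G` be an ordered graph whose ordered core is an ordered matching `N`.
Then for every ordered matching `M`, there is an ordered homomorphism `G → M`
iff some subset `X` of `V(M)` which is a union of edges of `M` induces an
ordered subgraph of `M` order-isomorphic to `N`. -/
theorem stmt12 {V U W : Type*} [LinearOrder V] [Fintype V] [LinearOrder U] [Fintype U]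
    [LinearOrder W] [Fintype W]
    (G : SimpleGraph V) (N : SimpleGraph U)
    (hN : IsOrderedMatching N) (hNcore : IsOrderedCore N)
    (hequiv : OrderedHomEquiv G N)
    (M : SimpleGraph W) (hM : IsOrderedMatching M) :
    (∃ f : V → W, Monotone f ∧ ∀ u v : V, G.Adj u v → M.Adj (f u) (f v)) ↔
    ∃ X : Set W, (∀ x ∈ X, ∀ y : W, M.Adj x y → y ∈ X) ∧
      ∃ e : U ≃o X, ∀ a b : U, N.Adj a b ↔ (M.induce X).Adj (e a) (e b) :=
  stmt12_general G N hN hNcore hequiv M hM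
end
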